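/- arXiv:2401.17861 — 5 statements merged into one kernel-verified Lean document; each statement's English description precedes it below -/
import Mathlib

section
/- Let Φ : ℝⁿ × ℝⁿ → ℝᵖ be a vector-valued symmetric bilinear form with components Φ^α_{ij} (1 ≤ i,j ≤ n, 1 ≤ α ≤ p) satisfying the traceless condition ∑_k Φ^α_{kk} = 0 for each α. Then |Φ|² = ∑_{α,i,j} (Φ^α_{ij})² ≥ (n/(n-1)) ∑_α ∑_{j=1}^n (Φ^α_{1j})². -/
/-!
Fix one symmetric traceless component `M = Φ^α`. Its first row contributes
`M₁₁² + T` to `|M|²`, where `T = ∑_{j≠1} M₁ⱼ²`; by symmetry the first column contributes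
another `T`, and the remaining diagonal entries contribute `∑_{i≠1} Mᵢᵢ²`. Tracelessness and
Cauchy–Schwarz give `M₁₁² = (∑_{i≠1} Mᵢᵢ)² ≤ (n-1) ∑_{i≠1} Mᵢᵢ²`, so
`|M|² ≥ n/(n-1) · M₁₁² + 2T ≥ n/(n-1) · (M₁₁² + T)` because `n/(n-1) ≤ 2`.
Summing over `α` gives the theorem.
-/

open Finset

variable {ι : Type*} [Fintype ι] [DecidableEq ι]

lemma sq_le_card_sub_one_mul_sum_erase_sq_of_sum_eq_zero {f : ι → ℝ} (hf : ∑ i, f i = 0)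
    (z : ι) : f z ^ 2 ≤ (Fintype.card ι - 1) * ∑ i ∈ univ.erase z, f i ^ 2 := by
  have hz : f z = -∑ i ∈ univ.erase z, f i := by
    rw [← add_sum_erase univ f (mem_univ z)] at hf
    linarith
  have hcard : ((univ.erase z).card : ℝ) = Fintype.card ι - 1 := by
    rw [card_erase_of_mem (mem_univ z), card_univ,
      Nat.cast_sub (Fintype.card_pos_iff.mpr ⟨z⟩)]
    simp
  rw [hz, neg_sq, ← hcard]
  exact sq_sum_le_card_mul_sum_sq

lemma sq_add_sq_le_sum_sq (f : ι → ℝ) {i j : ι} (hij : i ≠ j) :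
    f i ^ 2 + f j ^ 2 ≤ ∑ k, f k ^ 2 := by
  rw [← sum_pair (f := fun k ↦ f k ^ 2) hij]
  exact sum_le_sum_of_subset_of_nonneg (subset_univ _) fun k _ _ ↦ sq_nonneg (f k)

theorem Matrix.IsSymm.card_div_mul_sum_row_sq_le_sum_sq [Nontrivial ι] {M : Matrix ι ι ℝ}
    (hM : M.IsSymm) (htr : M.trace = 0) (z : ι) :
    (Fintype.card ι : ℝ) / (Fintype.card ι - 1) * ∑ j, M z j ^ 2 ≤ ∑ i, ∑ j, M i j ^ 2 := by
  set S := univ.erase z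
  set T := ∑ j ∈ S, M z j ^ 2
  have hrow : ∑ j, M z j ^ 2 = M z z ^ 2 + T := (add_sum_erase _ _ (mem_univ z)).symm
  have hrest : T + ∑ i ∈ S, M i i ^ 2 ≤ ∑ i ∈ S, ∑ j, M i j ^ 2 := by
    rw [← sum_add_distrib]
    refine sum_le_sum fun i hi ↦ ?_
    rw [← hM.apply z i]
    exact sq_add_sq_le_sum_sq (M i) (ne_of_mem_erase hi).symm
  have hdiag : M z z ^ 2 ≤ (Fintype.card ι - 1) * ∑ i ∈ S, M i i ^ 2 :=
    sq_le_card_sub_one_mul_sum_erase_sq_of_sum_eq_zero htr z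
  have hm : (1 : ℝ) ≤ Fintype.card ι - 1 := by
    have : (2 : ℝ) ≤ Fintype.card ι := by exact_mod_cast Fintype.one_lt_card
    linarith
  have hT : 0 ≤ T := sum_nonneg fun j _ ↦ sq_nonneg (M z j)
  rw [← add_sum_erase univ (fun i ↦ ∑ j, M i j ^ 2) (mem_univ z), hrow, div_mul_eq_mul_div,
    div_le_iff₀ (by linarith)]
  nlinarith

theorem stmt0 (n p : ℕ) (hn : 2 ≤ n)
    (Φ : Fin p → Fin n → Fin n → ℝ)
    (hsym : ∀ α i j, Φ α i j = Φ α j i)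
    (htr : ∀ α, ∑ k, Φ α k k = 0) :
    (∑ α, ∑ i, ∑ j, (Φ α i j) ^ 2) ≥
      ((n : ℝ) / (n - 1)) * ∑ α, ∑ j, (Φ α ⟨0, by omega⟩ j) ^ 2 := by
  have : Nontrivial (Fin n) := Fin.nontrivial_iff_two_le.mpr hn
  rw [ge_iff_le, mul_sum]
  refine sum_le_sum fun α _ ↦ ?_
  simpa only [Fintype.card_fin] using
    Matrix.IsSymm.card_div_mul_sum_row_sq_le_sum_sq (M := Φ α)
      (Matrix.IsSymm.ext fun i j ↦ hsym α j i) (htr α) ⟨0, by omega⟩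
end

section
/- Let u : [0,a] → ℝ be positive and C², β > 0, c₀ > 0, t₀ > 1 constants, and suppose that for all ψ ∈ C²([0,a]) with ψ(0) = ψ(a) = 0 one has c₀ ∫₀ᵃ u^β ψ² ds ≤ −2t₀ ∫₀ᵃ u^β ψ ψ'' ds. Then a ≤ π√(2t₀/c₀). (Proof: take ψ(s) = sin(πs/a), for which ψ'' = −(π/a)²ψ, obtaining (c₀ − 2t₀π²/a²)∫₀ᵃ sin²(πs/a) u^β ds ≤ 0.) -/
open intervalIntegral Real

theorem stmt9 (a β c₀ t₀ : ℝ) (ha : 0 < a) (hβ : 0 < β) (hc₀ : 0 < c₀) (ht₀ : 1 < t₀)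
    (u : ℝ → ℝ) (hu : ContDiff ℝ 2 u) (hupos : ∀ s ∈ Set.Icc 0 a, 0 < u s)
    (hstab : ∀ ψ : ℝ → ℝ, ContDiff ℝ 2 ψ → ψ 0 = 0 → ψ a = 0 →
      c₀ * ∫ s in (0 : ℝ)..a, u s ^ β * ψ s ^ 2 ≤
        -2 * t₀ * ∫ s in (0 : ℝ)..a, u s ^ β * ψ s * deriv (deriv ψ) s) :
    a ≤ Real.pi * Real.sqrt (2 * t₀ / c₀) := by
  set c : ℝ := Real.pi / a with hc
  have hcpos : 0 < c := div_pos Real.pi_pos ha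
  set ψ : ℝ → ℝ := fun s => Real.sin (c * s) with hψ
  have hψc : ContDiff ℝ 2 ψ := Real.contDiff_sin.comp (contDiff_const.mul contDiff_id)
  have hψ0 : ψ 0 = 0 := by simp [hψ]
  have hψa : ψ a = 0 := by
    simp [hψ, hc, div_mul_cancel₀ Real.pi (ne_of_gt ha)]
  have hd1 : deriv ψ = fun x => Real.cos (c * x) * c := by
    funext x
    have : HasDerivAt ψ (Real.cos (c * x) * c) x := by
      simpa [hψ, Function.comp_def] using (Real.hasDerivAt_sin (c * x)).comp x ((hasDerivAt_id x).const_mul c)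
    exact this.deriv
  have hd2 : deriv (deriv ψ) = fun x => -Real.sin (c * x) * c * c := by
    rw [hd1]
    funext x
    have : HasDerivAt (fun x => Real.cos (c * x) * c) (-Real.sin (c * x) * c * c) x := by
      have h := ((Real.hasDerivAt_cos (c * x)).comp x
        ((hasDerivAt_id x).const_mul c)).mul_const c
      simpa [mul_comm, mul_assoc, mul_left_comm] using h
    exact this.deriv
  set I : ℝ := ∫ s in (0 : ℝ)..a, u s ^ β * ψ s ^ 2 with hI
  have hcontOn : ContinuousOn (fun s => u s ^ β * ψ s ^ 2) (Set.Icc 0 a) := by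
    apply ContinuousOn.mul
    · exact (hu.continuous.continuousOn).rpow_const (fun x _ => Or.inr hβ.le)
    · exact (hψc.continuous.pow 2).continuousOn
  have hIint : IntervalIntegrable (fun s => u s ^ β * ψ s ^ 2) MeasureTheory.volume 0 a := by
    apply ContinuousOn.intervalIntegrable
    rwa [Set.uIcc_of_le ha.le]
  have hIpos : 0 < I := by
    apply intervalIntegral.intervalIntegral_pos_of_pos_on hIint _ ha
    intro x hx
    have hx1 : 0 < c * x := mul_pos hcpos hx.1
    have hx2 : c * x < Real.pi := by
      have := (mul_lt_mul_iff_right₀ hcpos).mpr hx.2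
      rwa [hc, div_mul_cancel₀ Real.pi (ne_of_gt ha)] at this
    have hsin : 0 < Real.sin (c * x) := Real.sin_pos_of_pos_of_lt_pi hx1 hx2
    have hur : 0 < u x ^ β :=
      Real.rpow_pos_of_pos (hupos x (Set.mem_Icc.mpr ⟨hx.1.le, hx.2.le⟩)) β
    positivity
  have hintrw : (∫ s in (0 : ℝ)..a, u s ^ β * ψ s * deriv (deriv ψ) s)
      = -(c ^ 2) * I := by
    rw [hd2, hI]
    rw [← intervalIntegral.integral_const_mul]
    apply intervalIntegral.integral_congr
    intro x _
    simp only [hψ]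
    ring
  have key := hstab ψ hψc hψ0 hψa
  rw [hintrw] at key
  -- key : c₀ * I ≤ -2 * t₀ * (-(c ^ 2) * I)
  have hkey2 : c₀ * I ≤ 2 * t₀ * c ^ 2 * I := by nlinarith
  have hc₀le : c₀ ≤ 2 * t₀ * c ^ 2 := le_of_mul_le_mul_right (by nlinarith) hIpos
  have hsq : a ^ 2 ≤ Real.pi ^ 2 * (2 * t₀ / c₀) := by
    have hc2 : c ^ 2 = Real.pi ^ 2 / a ^ 2 := by rw [hc]; field_simp
    rw [hc2] at hc₀le
    have ha2 : 0 < a ^ 2 := by positivity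
    have h1 : c₀ * a ^ 2 ≤ 2 * t₀ * Real.pi ^ 2 := by
      have := mul_le_mul_of_nonneg_right hc₀le ha2.le
      calc c₀ * a ^ 2 ≤ 2 * t₀ * (Real.pi ^ 2 / a ^ 2) * a ^ 2 := this
        _ = 2 * t₀ * Real.pi ^ 2 := by field_simp
    rw [mul_div_assoc', le_div_iff₀ hc₀]
    nlinarith [h1]
  calc a = Real.sqrt (a ^ 2) := (Real.sqrt_sq ha.le).symm
    _ ≤ Real.sqrt (Real.pi ^ 2 * (2 * t₀ / c₀)) := Real.sqrt_le_sqrt hsq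
    _ = Real.pi * Real.sqrt (2 * t₀ / c₀) := by
        rw [Real.sqrt_mul (sq_nonneg _), Real.sqrt_sq Real.pi_pos.le]
end

section
/- Let n ≥ 2, p ≥ 1, and suppose h^α_{ij} (1 ≤ i,j ≤ n, 1 ≤ α ≤ p) is symmetric in (i,j) with ∑_k h^α_{kk} = 0 for each α (minimality), and set |A|² = ∑_{α,i,j}(h^α_{ij})². If R₁₁ = (n−1) − ∑_α ∑_{j=1}^n (h^α_{1j})² (Gauss equation for a minimal submanifold of the unit sphere), then R₁₁ ≥ (n−1) − ((n−1)/n)|A|². -/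
open Finset

lemma stmt11_key (n : ℕ) (hn : 2 ≤ n) (g : Fin n → Fin n → ℝ)
    (hsym : ∀ i j, g i j = g j i) (htr : ∑ k, g k k = 0) :
    (n : ℝ) * ∑ j, (g ⟨0, by omega⟩ j) ^ 2 ≤ ((n : ℝ) - 1) * ∑ i, ∑ j, (g i j) ^ 2 := by
  set i0 : Fin n := ⟨0, by omega⟩ with hi0
  set s : Finset (Fin n) := Finset.univ.erase i0 with hs
  have hcard : (s.card : ℝ) = (n : ℝ) - 1 := by
    have : s.card = n - 1 := by
      simp [hs, Finset.card_erase_of_mem, Finset.card_univ]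
    rw [this]
    have : (1:ℕ) ≤ n := by omega
    push_cast [Nat.cast_sub this]
    ring
  set d : ℝ := g i0 i0 with hd
  set O : ℝ := ∑ j ∈ s, (g i0 j) ^ 2 with hO
  set D : ℝ := ∑ i ∈ s, (g i i) ^ 2 with hD
  set Q : ℝ := ∑ j, (g i0 j) ^ 2 with hQ
  set T : ℝ := ∑ i, ∑ j, (g i j) ^ 2 with hT
  have hmem : i0 ∈ Finset.univ := Finset.mem_univ _
  have hsumerase : ∀ f : Fin n → ℝ, (∑ j ∈ s, f j) + f i0 = ∑ j, f j := by
    intro f; exact Finset.sum_erase_add _ _ hmem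
  have hQeq : Q = O + d ^ 2 := by
    rw [hQ, ← hsumerase (fun j => (g i0 j)^2)]
  have htraceS : ∑ k ∈ s, g k k = -d := by
    have := hsumerase (fun k => g k k)
    linarith [htr, this]
  have hCS : d ^ 2 ≤ ((n : ℝ) - 1) * D := by
    have := sq_sum_le_card_mul_sum_sq (s := s) (f := fun k => g k k)
    rw [htraceS] at this
    calc d ^ 2 = (-d) ^ 2 := by ring
    _ ≤ (s.card : ℝ) * ∑ k ∈ s, (g k k) ^ 2 := by exact_mod_cast this
    _ = ((n : ℝ) - 1) * D := by rw [hcard]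
  have hTlb : Q + O + D ≤ T := by
    have hinner : ∀ i ∈ s, (g i i0) ^ 2 + (g i i) ^ 2 ≤ ∑ j, (g i j) ^ 2 := by
      intro i hi
      have hne : i0 ≠ i := (Finset.mem_erase.mp hi).1.symm
      have hpair : ∑ j ∈ ({i0, i} : Finset (Fin n)), (g i j) ^ 2
          = (g i i0) ^ 2 + (g i i) ^ 2 := Finset.sum_pair hne
      rw [← hpair]
      apply Finset.sum_le_sum_of_subset_of_nonneg (Finset.subset_univ _)
      intro j _ _; positivity
    have hTsplit : T = Q + ∑ i ∈ s, ∑ j, (g i j) ^ 2 := by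
      rw [hT, hQ, ← hsumerase (fun i => ∑ j, (g i j)^2)]; ring
    have hsum : ∑ i ∈ s, ((g i i0) ^ 2 + (g i i) ^ 2) ≤ ∑ i ∈ s, ∑ j, (g i j) ^ 2 :=
      Finset.sum_le_sum hinner
    have hOD : ∑ i ∈ s, ((g i i0) ^ 2 + (g i i) ^ 2) = O + D := by
      rw [Finset.sum_add_distrib, hO, hD]
      congr 1
      apply Finset.sum_congr rfl
      intro i _; rw [hsym i i0]
    rw [hTsplit]; linarith [hOD ▸ hsum]
  have hOnn : 0 ≤ O := by rw [hO]; positivity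
  have hDnn : 0 ≤ D := by rw [hD]; positivity
  have hN : (2 : ℝ) ≤ (n : ℝ) := by exact_mod_cast hn
  nlinarith [mul_nonneg (sub_nonneg.mpr hN) hOnn]

theorem stmt11 (n p : ℕ) (hn : 2 ≤ n) (hp : 1 ≤ p)
    (h : Fin p → Fin n → Fin n → ℝ)
    (hsym : ∀ α i j, h α i j = h α j i)
    (htr : ∀ α, ∑ k, h α k k = 0)
    (A2 R11 : ℝ)
    (hA2 : A2 = ∑ α, ∑ i, ∑ j, (h α i j) ^ 2)
    (hR11 : R11 = ((n : ℝ) - 1) - ∑ α, ∑ j, (h α ⟨0, by omega⟩ j) ^ 2) :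
    R11 ≥ ((n : ℝ) - 1) - (((n : ℝ) - 1) / n) * A2 := by
  have hnpos : (0 : ℝ) < n := by positivity
  have key : ∀ α, ∑ j, (h α ⟨0, by omega⟩ j) ^ 2
      ≤ (((n : ℝ) - 1) / n) * ∑ i, ∑ j, (h α i j) ^ 2 := by
    intro α
    have := stmt11_key n hn (h α) (hsym α) (htr α)
    rw [div_mul_eq_mul_div, le_div_iff₀ hnpos]
    linarith
  have hsumle : ∑ α, ∑ j, (h α ⟨0, by omega⟩ j) ^ 2
      ≤ (((n : ℝ) - 1) / n) * A2 := by
    rw [hA2, Finset.mul_sum]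
    exact Finset.sum_le_sum fun α _ => key α
  rw [hR11]
  linarith
end

section
/- Let n ≥ 3, p ≥ 1, β ≥ n/8, and suppose real numbers |Φ|² ≥ 0, H² ≥ 0 and R₁₁ satisfy, for all ε > 0, R₁₁ ≥ (n−1) + (n−1 − (n−2)/(2ε))H² − (1 + (n−2)ε/2)·((n−1)/n)·|Φ|². Then R₁₁ + 2β|Φ|² ≥ n−1. -/
/-!
Take `ε = (n - 2) / (2 (n - 1))`, the left end of the admissible interval: it kills the
coefficient of `H²` and turns that of `|Φ|²` into `n / 4`, so `R₁₁ ≥ (n - 1) - (n / 4) |Φ|²`.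
Since `β ≥ n / 8`, the term `2β |Φ|²` absorbs the negative part.
-/

section RicciEstimate

variable {m : ℝ}

lemma sub_one_sub_div_two_mul_eq_zero (hm : 2 < m) :
    m - 1 - (m - 2) / (2 * ((m - 2) / (2 * (m - 1)))) = 0 := by
  have h₂ : m - 2 ≠ 0 := by linarith
  have h₁ : m - 1 ≠ 0 := by linarith
  field_simp
  ring

lemma one_add_mul_div_two_mul_sub_one_div_eq (hm : 2 < m) :
    (1 + (m - 2) * ((m - 2) / (2 * (m - 1))) / 2) * ((m - 1) / m) = m / 4 := by
  have h₁ : m - 1 ≠ 0 := by linarith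
  have h₀ : m ≠ 0 := by linarith
  field_simp
  ring

lemma ge_sub_div_four_mul_of_forall_pos {Φ2 H2 R : ℝ} (hm : 2 < m)
    (hR : ∀ ε : ℝ, 0 < ε →
      R ≥ (m - 1) + (m - 1 - (m - 2) / (2 * ε)) * H2 - (1 + (m - 2) * ε / 2) * ((m - 1) / m) * Φ2) :
    R ≥ m - 1 - m / 4 * Φ2 := by
  have hε : 0 < (m - 2) / (2 * (m - 1)) := div_pos (by linarith) (by linarith)
  have h := hR _ hε
  rwa [sub_one_sub_div_two_mul_eq_zero hm, zero_mul, add_zero,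
    one_add_mul_div_two_mul_sub_one_div_eq hm] at h

end RicciEstimate

theorem stmt17_general (n : ℕ) (hn : 3 ≤ n) (β : ℝ) (hβ : (n : ℝ) / 8 ≤ β)
    (Φ2 H2 R11 : ℝ) (hΦ2 : 0 ≤ Φ2)
    (hR : ∀ ε : ℝ, 0 < ε →
      R11 ≥ ((n : ℝ) - 1) + ((n : ℝ) - 1 - ((n : ℝ) - 2) / (2 * ε)) * H2
        - (1 + ((n : ℝ) - 2) * ε / 2) * (((n : ℝ) - 1) / n) * Φ2) :
    R11 + 2 * β * Φ2 ≥ (n : ℝ) - 1 := by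
  have hn' : (2 : ℝ) < n := by exact_mod_cast hn
  have hRicci := ge_sub_div_four_mul_of_forall_pos hn' hR
  have hβΦ := mul_le_mul_of_nonneg_right hβ hΦ2
  linarith

theorem stmt17 (n p : ℕ) (hn : 3 ≤ n) (hp : 1 ≤ p) (β : ℝ) (hβ : (n : ℝ) / 8 ≤ β)
    (Φ2 H2 R11 : ℝ) (hΦ2 : 0 ≤ Φ2) (hH2 : 0 ≤ H2)
    (hR : ∀ ε : ℝ, 0 < ε →
      R11 ≥ ((n : ℝ) - 1) + ((n : ℝ) - 1 - ((n : ℝ) - 2) / (2 * ε)) * H2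
        - (1 + ((n : ℝ) - 2) * ε / 2) * (((n : ℝ) - 1) / n) * Φ2) :
    R11 + 2 * β * Φ2 ≥ (n : ℝ) - 1 :=
  stmt17_general n hn β hβ Φ2 H2 R11 hΦ2 hR
end

section
/- Let n ≥ 2 and H > 0. Consider the H(r)-torus 𝕊^{n−1}(r) × 𝕊¹(√(1−r²)) ⊂ 𝕊^{n+1} with r² < (n−1)/n. Set λ = √(1−r²)/r (the principal curvature in the 𝕊^{n−1} directions) and μ = −r/√(1−r²), so that its mean curvature is H = ((n−1)λ + μ)/n = ((n−1) − nr²)/(nr√(1−r²)), and let |Φ|² = (n−1)(λ−H)² + (μ−H)² be the squared norm of its umbilicity tensor. Then P(|Φ|) = 0, where P(x) = x² + (n(n−2)/√(n(n−1)))Hx − n(1+H²); i.e., |Φ| = b(n,H), where b(n,H) is the positive root of P. -/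
theorem stmt18 (n : ℕ) (hn : 2 ≤ n) (r : ℝ) (hr0 : 0 < r) (hr1 : r < 1)
    (hr2 : r ^ 2 < ((n : ℝ) - 1) / n)
    (lam mu H Φ2 : ℝ)
    (hlam : lam = Real.sqrt (1 - r ^ 2) / r)
    (hmu : mu = -r / Real.sqrt (1 - r ^ 2))
    (hH : H = (((n : ℝ) - 1) * lam + mu) / n)
    (hΦ2 : Φ2 = ((n : ℝ) - 1) * (lam - H) ^ 2 + (mu - H) ^ 2) :
    H = (((n : ℝ) - 1) - n * r ^ 2) / (n * r * Real.sqrt (1 - r ^ 2)) ∧ 0 < H ∧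
      Φ2 + ((n : ℝ) * ((n : ℝ) - 2) / Real.sqrt ((n : ℝ) * ((n : ℝ) - 1))) * H * Real.sqrt Φ2
        - (n : ℝ) * (1 + H ^ 2) = 0 := by
  have hn2 : (2 : ℝ) ≤ (n : ℝ) := by exact_mod_cast hn
  have hnpos : (0 : ℝ) < (n : ℝ) := by linarith
  have hn1 : (0 : ℝ) < (n : ℝ) - 1 := by linarith
  set s := Real.sqrt (1 - r ^ 2) with hsdef
  have h1r : (0 : ℝ) < 1 - r ^ 2 := by nlinarith
  have hs0 : 0 < s := Real.sqrt_pos.mpr h1r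
  have hs2 : s ^ 2 = 1 - r ^ 2 := Real.sq_sqrt h1r.le
  set t := Real.sqrt ((n : ℝ) - 1) with htdef
  set u := Real.sqrt (n : ℝ) with hudef
  have ht0 : 0 < t := Real.sqrt_pos.mpr hn1
  have hu0 : 0 < u := Real.sqrt_pos.mpr hnpos
  have ht2 : t ^ 2 = (n : ℝ) - 1 := Real.sq_sqrt hn1.le
  have hu2 : u ^ 2 = (n : ℝ) := Real.sq_sqrt hnpos.le
  have hmul : Real.sqrt ((n : ℝ) * ((n : ℝ) - 1)) = u * t := by
    rw [Real.sqrt_mul hnpos.le]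
  have hHval : H = (((n : ℝ) - 1) - n * r ^ 2) / (n * r * s) := by
    rw [hH, hlam, hmu]
    field_simp
    linear_combination ((n : ℝ) - 1) * hs2
  have hr2' : (n : ℝ) * r ^ 2 < (n : ℝ) - 1 := by
    have := (lt_div_iff₀ hnpos).mp hr2
    linarith
  have hHpos : 0 < H := by
    rw [hHval]
    apply div_pos (by linarith) (by positivity)
  refine ⟨hHval, hHpos, ?_⟩
  have hd : lam - mu = 1 / (r * s) := by
    rw [hlam, hmu]
    field_simp
    linear_combination hs2
  have h1 : lam - H = (lam - mu) / n := by
    rw [hH]; field_simp; ring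
  have h2 : mu - H = -(((n : ℝ) - 1) * (lam - mu)) / n := by
    rw [hH]; field_simp; ring
  have hΦsimple : Φ2 = ((n : ℝ) - 1) / ((n : ℝ) * r ^ 2 * s ^ 2) := by
    rw [hΦ2, h1, h2, hd]
    field_simp
    ring
  have hΦalt : Φ2 = (t / (u * r * s)) ^ 2 := by
    rw [hΦsimple]
    field_simp
    linear_combination ((n:ℝ)-1)*hu2 - (n:ℝ)*ht2
  have hsqrtΦ : Real.sqrt Φ2 = t / (u * r * s) := by
    rw [hΦalt, Real.sqrt_sq (by positivity)]
  rw [hsqrtΦ, hΦsimple, hHval, hmul]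
  field_simp
  linear_combination
    ((((n:ℝ)-1) - (n:ℝ)^2*r^2*s^2 - ((n:ℝ)-1-(n:ℝ)*r^2)^2) * hu2 - (n:ℝ)^3*r^2 * hs2)
end
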